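/- Let p ≥ 2 and Δ ∈ (0, Δ_max). Assume b(t,·) and σ(t,·) are Lipschitz with constants [b]_Lip and [σ]_Lip ([σ]_Lip with respect to the operator norm), and let Z be an ℝ^q-valued random vector with E[Z] = 0 and E|Z|^p < ∞. Then for all x, x' ∈ ℝ^d and every k: E| E_k(x,Z) − E_k(x',Z) |^p ≤ |x−x'|^p · exp( Δ( p[b]_Lip + c_p^{(1)} + [σ]_Lip^p c^{(2)}_{p,Δ_max} E|Z|^p ) ). In particular the Euler operator E_k(·,Z) is L^p-Lipschitz with constant exp( Δ( p[b]_Lip + c_p^{(1)} + [σ]_Lip^p c^{(2)}_{p,Δ_max} E|Z|^p )/p ). -/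

import Mathlib

open MeasureTheory Real

noncomputable section

abbrev Euc (d : ℕ) : Type := EuclideanSpace ℝ (Fin d)

def c₁ (r : ℝ) : ℝ := 2 ^ (max (r - 3) 0) * ((r - 1) * (r - 2) / 2)

def c₂ (r h₀ : ℝ) : ℝ := 2 ^ (max (r - 3) 0) * (r - 1) * (1 + r / 2 * h₀ ^ (r / 2 - 1))

/-- The Euler operator `E_k(x,ε) = x + Δ b(t_k,x) + √Δ σ(t_k,x) ε`. -/
def euler {d q : ℕ} (Δ : ℝ) (b : ℝ → Euc d → Euc d) (σ : ℝ → Euc d → (Euc q →L[ℝ] Euc d))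
    (tk : ℝ) (x : Euc d) (e : Euc q) : Euc d :=
  x + Δ • b tk x + Real.sqrt Δ • (σ tk x) e

/-!
Write the increment as `a + √Δ • S Z` with `a = x - x' + Δ • (b x - b x')` and
`S = σ x - σ x'`. For `p ≥ 2` the second-order Taylor bound
`‖a + v‖ ^ p ≤ ‖a‖ ^ p + p ‖a‖ ^ (p - 2) ⟪a, v⟫ + p (p - 1) / 2 (‖a‖ + ‖v‖) ^ (p - 2) ‖v‖ ^ 2`
holds pointwise. Its first-order term has mean zero because `Z` is centred; the remainder is split
by `(α + β) ^ (p - 2) ≤ 2 ^ (p - 3)₊ (α ^ (p - 2) + β ^ (p - 2))`, Young's inequality and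
`Δ ^ (p / 2) ≤ Δ Δmax ^ (p / 2 - 1)` into `Δ c₁ ‖a‖ ^ p + Δ c₂ ‖S‖ ^ p E‖Z‖ ^ p`, which is where the
constants come from. Finally `‖a‖ ≤ (1 + Δ [b]) ‖x - x'‖` and `1 + u ≤ exp u`.
-/

open Set
open scoped InnerProductSpace

theorem image_le_taylor_of_deriv2_le {f f' f'' : ℝ → ℝ} {a b C : ℝ} (hab : a ≤ b)
    (hf : ∀ x ∈ Icc a b, HasDerivAt f (f' x) x) (hf' : ∀ x ∈ Icc a b, HasDerivAt f' (f'' x) x)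
    (hC : ∀ x ∈ Icc a b, f'' x ≤ C) :
    f b ≤ f a + f' a * (b - a) + C / 2 * (b - a) ^ 2 := by
  have monotoneOn_of_deriv {g g' : ℝ → ℝ} (hg : ∀ x ∈ Icc a b, HasDerivAt g (g' x) x)
      (hg' : ∀ x ∈ Icc a b, 0 ≤ g' x) : MonotoneOn g (Icc a b) :=
    monotoneOn_of_hasDerivWithinAt_nonneg (convex_Icc a b)
      (fun x hx => (hg x hx).continuousAt.continuousWithinAt)
      (fun x hx => (hg x (interior_subset hx)).hasDerivWithinAt)
      (fun x hx => hg' x (interior_subset hx))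
  have hθ : MonotoneOn (fun x => C * (x - a) - f' x) (Icc a b) :=
    monotoneOn_of_deriv (fun x hx => (((hasDerivAt_id x).sub_const a).const_mul C).sub (hf' x hx))
      (fun x hx => by simpa using hC x hx)
  have hφ : MonotoneOn (fun x => f' a * (x - a) + C / 2 * (x - a) ^ 2 - f x) (Icc a b) := by
    refine monotoneOn_of_deriv (g' := fun x => f' a + C * (x - a) - f' x) (fun x hx => ?_)
      (fun x hx => ?_)
    · have hsq : HasDerivAt (fun x => (x - a) ^ 2) (2 * (x - a)) x := by
        simpa using ((hasDerivAt_id x).sub_const a).fun_pow 2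
      exact ((((hasDerivAt_id x).sub_const a).const_mul (f' a)).add (hsq.const_mul (C / 2))).sub
        (hf x hx) |>.congr_deriv (by ring)
    · have := hθ (left_mem_Icc.2 hab) hx hx.1
      simp only [sub_self, mul_zero, zero_sub] at this
      linarith
  have := hφ (left_mem_Icc.2 hab) (right_mem_Icc.2 hab) hab
  simp only [sub_self] at this
  linarith

-- The left side is `(Q ^ r)''` for a quadratic `Q` with `Q'' = 2 t ^ 2`.
theorem rpow_deriv2_le {r t Q Q' B : ℝ} (hr : 1 ≤ r) (hQ : 0 < Q)
    (hQ' : Q' ^ 2 ≤ 4 * t ^ 2 * Q) (hQB : Q ≤ B) :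
    2 * t ^ 2 * r * Q ^ (r - 1) + Q' * r * (Q' * (r - 1) * Q ^ (r - 1 - 1))
      ≤ 2 * r * (2 * r - 1) * t ^ 2 * B ^ (r - 1) := by
  have hsq : Q' ^ 2 * Q ^ (r - 1 - 1) ≤ 4 * t ^ 2 * Q ^ (r - 1) := by
    rw [rpow_sub_one hQ.ne', mul_div_assoc', div_le_iff₀ hQ]
    nlinarith [mul_le_mul_of_nonneg_right hQ' (rpow_nonneg hQ.le (r - 1))]
  calc 2 * t ^ 2 * r * Q ^ (r - 1) + Q' * r * (Q' * (r - 1) * Q ^ (r - 1 - 1))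
      = 2 * r * t ^ 2 * Q ^ (r - 1) + r * (r - 1) * (Q' ^ 2 * Q ^ (r - 1 - 1)) := by ring
    _ ≤ 2 * r * t ^ 2 * Q ^ (r - 1) + r * (r - 1) * (4 * t ^ 2 * Q ^ (r - 1)) := by gcongr
    _ = 2 * r * (2 * r - 1) * t ^ 2 * Q ^ (r - 1) := by ring
    _ ≤ 2 * r * (2 * r - 1) * t ^ 2 * B ^ (r - 1) := by
      gcongr
      exact mul_nonneg (by nlinarith) (sq_nonneg t)

-- `ε > 0` keeps the quadratic away from `0`, so that the chain rule for `rpow` applies twice.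
theorem rpow_quadratic_add_le {r s t c ε : ℝ} (hr : 1 ≤ r) (hs : 0 ≤ s) (ht : 0 ≤ t)
    (hc : c ^ 2 ≤ s ^ 2 * t ^ 2) (hε : 0 < ε) :
    (s ^ 2 + 2 * c + t ^ 2 + ε) ^ r
      ≤ (s ^ 2 + ε) ^ r + 2 * r * (s ^ 2 + ε) ^ (r - 1) * c
        + r * (2 * r - 1) * ((s + t) ^ 2 + ε) ^ (r - 1) * t ^ 2 := by
  obtain ⟨hc_lo, hc_hi⟩ : -(s * t) ≤ c ∧ c ≤ s * t :=
    abs_le.1 (abs_le_of_sq_le_sq (by rwa [mul_pow]) (mul_nonneg hs ht))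
  set q : ℝ → ℝ := fun l => s ^ 2 + 2 * c * l + t ^ 2 * l ^ 2 + ε
  set q' : ℝ → ℝ := fun l => 2 * c + 2 * t ^ 2 * l
  have hq_deriv (l : ℝ) : HasDerivAt q (q' l) l := by
    have := (((hasDerivAt_id l).const_mul (2 * c)).const_add (s ^ 2)).add
      (((hasDerivAt_id l).fun_pow 2).const_mul (t ^ 2)) |>.add_const ε
    exact this.congr_deriv (by simp only [id, q']; ring)
  have hq_pos : ∀ l ∈ Icc (0 : ℝ) 1, 0 < q l := fun l hl => by
    nlinarith [sq_nonneg (s - t * l), mul_le_mul_of_nonneg_right hc_lo hl.1]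
  have hq'_sq (l : ℝ) : q' l ^ 2 ≤ 4 * t ^ 2 * q l := by
    simp only [q, q']
    nlinarith [mul_nonneg hε.le (sq_nonneg t)]
  have hq_le : ∀ l ∈ Icc (0 : ℝ) 1, q l ≤ (s + t) ^ 2 + ε := fun l hl => by
    nlinarith [mul_le_mul_of_nonneg_right hc_hi hl.1,
      mul_le_of_le_one_right (mul_nonneg hs ht) hl.2,
      mul_le_of_le_one_right (sq_nonneg t) (pow_le_one₀ hl.1 hl.2 : l ^ 2 ≤ 1)]
  set g' : ℝ → ℝ := fun l => q' l * r * q l ^ (r - 1)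
  have hq'_deriv (l : ℝ) : HasDerivAt q' (2 * t ^ 2) l := by
    simpa [q'] using ((hasDerivAt_id l).const_mul (2 * t ^ 2)).const_add (2 * c)
  have key := image_le_taylor_of_deriv2_le (f := fun l => q l ^ r) (f' := g')
    (C := 2 * r * (2 * r - 1) * t ^ 2 * ((s + t) ^ 2 + ε) ^ (r - 1)) zero_le_one
    (fun l _ => (hq_deriv l).rpow_const (Or.inr hr))
    (fun l hl => ((hq'_deriv l).mul_const r).mul
      ((hq_deriv l).rpow_const (Or.inl (hq_pos l hl).ne')))
    (fun l hl => rpow_deriv2_le hr (hq_pos l hl) (hq'_sq l) (hq_le l hl))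
  simp only [q, g', q'] at key
  convert key using 1 <;> ring_nf

theorem rpow_quadratic_le {r s t c : ℝ} (hr : 1 ≤ r) (hs : 0 ≤ s) (ht : 0 ≤ t)
    (hc : c ^ 2 ≤ s ^ 2 * t ^ 2) :
    (s ^ 2 + 2 * c + t ^ 2) ^ r
      ≤ (s ^ 2) ^ r + 2 * r * (s ^ 2) ^ (r - 1) * c
        + r * (2 * r - 1) * ((s + t) ^ 2) ^ (r - 1) * t ^ 2 := by
  have key := ContinuousWithinAt.closure_le (s := Ioi 0) (x := 0) (by simp)
    (f := fun ε => (s ^ 2 + 2 * c + t ^ 2 + ε) ^ r)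
    (g := fun ε => (s ^ 2 + ε) ^ r + 2 * r * (s ^ 2 + ε) ^ (r - 1) * c
        + r * (2 * r - 1) * ((s + t) ^ 2 + ε) ^ (r - 1) * t ^ 2)
    (by fun_prop (disch := right; linarith)) (by fun_prop (disch := right; linarith))
    (fun ε hε => rpow_quadratic_add_le hr hs ht hc hε)
  simpa using key

theorem sq_rpow_div_two {x : ℝ} (hx : 0 ≤ x) (q : ℝ) : (x ^ 2) ^ (q / 2) = x ^ q := by
  rw [rpow_div_two_eq_sqrt q (sq_nonneg x), sqrt_sq hx]

theorem norm_add_rpow_le {E : Type*} [NormedAddCommGroup E] [InnerProductSpace ℝ E] {p : ℝ}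
    (hp : 2 ≤ p) (u v : E) :
    ‖u + v‖ ^ p ≤ ‖u‖ ^ p + p * ‖u‖ ^ (p - 2) * ⟪u, v⟫_ℝ
        + p * (p - 1) / 2 * (‖u‖ + ‖v‖) ^ (p - 2) * ‖v‖ ^ 2 := by
  have hc : ⟪u, v⟫_ℝ ^ 2 ≤ ‖u‖ ^ 2 * ‖v‖ ^ 2 := by
    rw [← mul_pow, ← sq_abs]
    exact pow_le_pow_left₀ (abs_nonneg _) (abs_real_inner_le_norm u v) 2
  have key := rpow_quadratic_le (r := p / 2) (by linarith) (norm_nonneg u) (norm_nonneg v) hc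
  have hexp : p / 2 - 1 = (p - 2) / 2 := by ring
  rw [← norm_add_sq_real, hexp, sq_rpow_div_two (norm_nonneg _), sq_rpow_div_two (norm_nonneg _),
    sq_rpow_div_two (norm_nonneg _), sq_rpow_div_two (by positivity)] at key
  convert key using 2 <;> ring

theorem add_rpow_le_two_rpow_max_mul {a b m : ℝ} (ha : 0 ≤ a) (hb : 0 ≤ b) (hm : 0 ≤ m) :
    (a + b) ^ m ≤ 2 ^ max (m - 1) 0 * (a ^ m + b ^ m) := by
  lift a to NNReal using ha
  lift b to NNReal using hb
  rcases le_total m 1 with h | h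
  · rw [max_eq_right (by linarith), rpow_zero, one_mul]
    exact_mod_cast NNReal.rpow_add_le_add_rpow a b hm h
  · rw [max_eq_left (by linarith)]
    exact_mod_cast NNReal.rpow_add_le_mul_rpow_add_rpow a b h

theorem add_rpow_sub_two_mul_sq_le {a b p : ℝ} (ha : 0 ≤ a) (hb : 0 ≤ b) (hp : 2 ≤ p) :
    (a + b) ^ (p - 2) * b ^ 2 ≤ 2 ^ max (p - 3) 0 * (a ^ (p - 2) * b ^ 2 + b ^ p) := by
  have h := add_rpow_le_two_rpow_max_mul ha hb (by linarith : 0 ≤ p - 2)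
  have hb_pow : b ^ (p - 2) * b ^ 2 = b ^ p := by
    rw [← rpow_natCast, ← rpow_add' hb (by norm_num; linarith)]
    norm_num
  rw [show p - 2 - 1 = p - 3 by ring] at h
  calc (a + b) ^ (p - 2) * b ^ 2 ≤ 2 ^ max (p - 3) 0 * (a ^ (p - 2) + b ^ (p - 2)) * b ^ 2 := by
        gcongr
    _ = 2 ^ max (p - 3) 0 * (a ^ (p - 2) * b ^ 2 + b ^ p) := by rw [← hb_pow]; ring

theorem rpow_sub_two_mul_sq_le {u v p : ℝ} (hu : 0 ≤ u) (hv : 0 ≤ v) (hp : 2 ≤ p) :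
    u ^ (p - 2) * v ^ 2 ≤ (p - 2) / p * u ^ p + 2 / p * v ^ p := by
  have hp0 : 0 < p := by linarith
  have h := geom_mean_le_arith_mean2_weighted (w₁ := (p - 2) / p) (w₂ := 2 / p)
    (div_nonneg (by linarith) hp0.le) (div_nonneg zero_le_two hp0.le)
    (rpow_nonneg hu p) (rpow_nonneg hv p) (by rw [← add_div, sub_add_cancel, div_self hp0.ne'])
  rwa [← rpow_mul hu, ← rpow_mul hv, mul_div_cancel₀ _ hp0.ne', mul_div_cancel₀ _ hp0.ne',
    rpow_two] at h

theorem rpow_le_mul_rpow_of_le_sqrt_mul {y w p Δ Δmax : ℝ} (hy : 0 ≤ y) (hw : 0 ≤ w)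
    (hp : 2 ≤ p) (hΔ : 0 ≤ Δ) (hΔmax : Δ ≤ Δmax) (hyw : y ≤ √Δ * w) :
    y ^ p ≤ Δ * Δmax ^ (p / 2 - 1) * w ^ p := by
  calc y ^ p ≤ (√Δ * w) ^ p := rpow_le_rpow hy hyw (by linarith)
    _ = Δ * Δ ^ (p / 2 - 1) * w ^ p := by
      rw [mul_rpow (sqrt_nonneg Δ) hw, sqrt_eq_rpow, ← rpow_mul hΔ,
        ← rpow_one_add' hΔ (by linarith)]
      ring_nf
    _ ≤ Δ * Δmax ^ (p / 2 - 1) * w ^ p := by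
      gcongr
      linarith

theorem norm_add_rpow_le_of_norm_le {E : Type*} [NormedAddCommGroup E] [InnerProductSpace ℝ E]
    {p Δ Δmax w : ℝ} (hp : 2 ≤ p) (hΔ : 0 ≤ Δ) (hΔmax : Δ ≤ Δmax) (hw : 0 ≤ w) (u v : E)
    (hv : ‖v‖ ≤ √Δ * w) :
    ‖u + v‖ ^ p ≤ (1 + Δ * c₁ p) * ‖u‖ ^ p + p * ‖u‖ ^ (p - 2) * ⟪u, v⟫_ℝ
        + Δ * c₂ p Δmax * w ^ p := by
  have hp0 : 0 < p := by linarith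
  set K := 2 ^ max (p - 3) 0 * (p * (p - 1) / 2)
  have hK : 0 ≤ K := mul_nonneg (by positivity) (by nlinarith)
  have hv2 : ‖v‖ ^ 2 ≤ Δ * w ^ 2 := by
    simpa [mul_pow, sq_sqrt hΔ] using pow_le_pow_left₀ (norm_nonneg v) hv 2
  have hc₁ : K * ((p - 2) / p) = c₁ p := by simp only [K, c₁]; field_simp
  have hc₂ : K * (2 / p) + K * Δmax ^ (p / 2 - 1) = c₂ p Δmax := by
    simp only [K, c₂]; field_simp
  calc ‖u + v‖ ^ p
      ≤ ‖u‖ ^ p + p * ‖u‖ ^ (p - 2) * ⟪u, v⟫_ℝ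
        + p * (p - 1) / 2 * ((‖u‖ + ‖v‖) ^ (p - 2) * ‖v‖ ^ 2) := by
        linarith [norm_add_rpow_le hp u v]
    _ ≤ ‖u‖ ^ p + p * ‖u‖ ^ (p - 2) * ⟪u, v⟫_ℝ
        + p * (p - 1) / 2 * (2 ^ max (p - 3) 0 * (‖u‖ ^ (p - 2) * ‖v‖ ^ 2 + ‖v‖ ^ p)) := by
        gcongr _ + _ * ?_
        · nlinarith
        · exact add_rpow_sub_two_mul_sq_le (norm_nonneg u) (norm_nonneg v) hp
    _ = ‖u‖ ^ p + p * ‖u‖ ^ (p - 2) * ⟪u, v⟫_ℝ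
        + K * (‖u‖ ^ (p - 2) * ‖v‖ ^ 2 + ‖v‖ ^ p) := by
        simp only [K]; ring
    _ ≤ ‖u‖ ^ p + p * ‖u‖ ^ (p - 2) * ⟪u, v⟫_ℝ
        + K * (Δ * (‖u‖ ^ (p - 2) * w ^ 2) + Δ * Δmax ^ (p / 2 - 1) * w ^ p) := by
        have hu_v : ‖u‖ ^ (p - 2) * ‖v‖ ^ 2 ≤ ‖u‖ ^ (p - 2) * (Δ * w ^ 2) := by gcongr
        gcongr _ + K * (?_ + ?_)
        · linarith
        · exact rpow_le_mul_rpow_of_le_sqrt_mul (norm_nonneg v) hw hp hΔ hΔmax hv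
    _ ≤ ‖u‖ ^ p + p * ‖u‖ ^ (p - 2) * ⟪u, v⟫_ℝ
        + K * (Δ * ((p - 2) / p * ‖u‖ ^ p + 2 / p * w ^ p)
          + Δ * Δmax ^ (p / 2 - 1) * w ^ p) := by
        gcongr
        exact rpow_sub_two_mul_sq_le (norm_nonneg u) hw hp
    _ = (1 + Δ * c₁ p) * ‖u‖ ^ p + p * ‖u‖ ^ (p - 2) * ⟪u, v⟫_ℝ
        + Δ * c₂ p Δmax * w ^ p := by
        rw [← hc₁, ← hc₂]; ring

theorem c₁_nonneg {r : ℝ} (hr : 2 ≤ r) : 0 ≤ c₁ r :=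
  mul_nonneg (by positivity) (by nlinarith)

theorem c₂_nonneg {r h₀ : ℝ} (hr : 1 ≤ r) (hh₀ : 0 ≤ h₀) : 0 ≤ c₂ r h₀ := by
  unfold c₂
  have : 0 ≤ h₀ ^ (r / 2 - 1) := rpow_nonneg hh₀ _
  exact mul_nonneg (mul_nonneg (by positivity) (by linarith)) (by positivity)

theorem one_add_mul_exp_add_le_exp {β γ δ : ℝ} (hβ : 0 ≤ β) (hδ : 0 ≤ δ) :
    (1 + γ) * exp β + δ ≤ exp (β + γ + δ) := by
  have h1 : 1 ≤ exp β := one_le_exp hβ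
  calc (1 + γ) * exp β + δ ≤ exp β * (γ + δ + 1) := by nlinarith
    _ ≤ exp β * exp (γ + δ) := by gcongr; exact add_one_le_exp _
    _ = exp (β + γ + δ) := by rw [← exp_add, add_assoc]

theorem rpow_one_div_le_of_le_rpow_mul_exp {I D p K : ℝ} (hI : 0 ≤ I) (hD : 0 ≤ D) (hp : 0 < p)
    (h : I ≤ D ^ p * exp K) : I ^ (1 / p) ≤ exp (K / p) * D := by
  calc I ^ (1 / p) ≤ (D ^ p * exp K) ^ (1 / p) := rpow_le_rpow hI h (by positivity)
    _ = exp (K / p) * D := by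
      rw [mul_rpow (by positivity) (exp_nonneg K), ← rpow_mul hD, mul_one_div_cancel hp.ne',
        rpow_one, ← exp_mul, mul_one_div, mul_comm]

theorem integral_norm_add_sqrt_smul_rpow_le {E F Ω : Type*} [NormedAddCommGroup E]
    [InnerProductSpace ℝ E] [NormedAddCommGroup F] [NormedSpace ℝ F] [CompleteSpace F]
    [MeasurableSpace Ω] {P : Measure Ω} [IsProbabilityMeasure P] {p Δ Δmax : ℝ} (hp : 2 ≤ p)
    (hΔ : 0 ≤ Δ) (hΔmax : Δ ≤ Δmax) (a : E) (S : F →L[ℝ] E) {Z : Ω → F} (hZ1 : Integrable Z P)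
    (hZ0 : ∫ ω, Z ω ∂P = 0) (hZp : Integrable (fun ω => ‖Z ω‖ ^ p) P) :
    ∫ ω, ‖a + √Δ • S (Z ω)‖ ^ p ∂P
      ≤ (1 + Δ * c₁ p) * ‖a‖ ^ p + Δ * c₂ p Δmax * ‖S‖ ^ p * ∫ ω, ‖Z ω‖ ^ p ∂P := by
  set G : F →L[ℝ] ℝ := (innerSL ℝ a).comp (√Δ • S)
  have hpoint (ω : Ω) : ‖a + √Δ • S (Z ω)‖ ^ p
      ≤ (1 + Δ * c₁ p) * ‖a‖ ^ p + p * ‖a‖ ^ (p - 2) * G (Z ω)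
        + Δ * c₂ p Δmax * ‖S‖ ^ p * ‖Z ω‖ ^ p := by
    have hv : ‖√Δ • S (Z ω)‖ ≤ √Δ * (‖S‖ * ‖Z ω‖) := by
      rw [norm_smul, norm_of_nonneg (sqrt_nonneg Δ)]
      exact mul_le_mul_of_nonneg_left (S.le_opNorm _) (sqrt_nonneg Δ)
    have h := norm_add_rpow_le_of_norm_le hp hΔ hΔmax (by positivity) a _ hv
    rwa [mul_rpow (norm_nonneg _) (norm_nonneg _), ← mul_assoc] at h
  have hGZ : Integrable (fun ω => G (Z ω)) P := G.integrable_comp hZ1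
  have hI : Integrable (fun ω => (1 + Δ * c₁ p) * ‖a‖ ^ p + p * ‖a‖ ^ (p - 2) * G (Z ω)) P :=
    (integrable_const _).add (hGZ.const_mul _)
  calc ∫ ω, ‖a + √Δ • S (Z ω)‖ ^ p ∂P
      ≤ ∫ ω, (1 + Δ * c₁ p) * ‖a‖ ^ p + p * ‖a‖ ^ (p - 2) * G (Z ω)
          + Δ * c₂ p Δmax * ‖S‖ ^ p * ‖Z ω‖ ^ p ∂P :=
        integral_mono_of_nonneg (Filter.Eventually.of_forall fun ω => by positivity)
          (hI.add (hZp.const_mul _))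
          (Filter.Eventually.of_forall hpoint)
    _ = (1 + Δ * c₁ p) * ‖a‖ ^ p + p * ‖a‖ ^ (p - 2) * G (∫ ω, Z ω ∂P)
          + Δ * c₂ p Δmax * ‖S‖ ^ p * ∫ ω, ‖Z ω‖ ^ p ∂P := by
        rw [integral_add hI (hZp.const_mul _),
          integral_add (integrable_const _) (hGZ.const_mul _), integral_const, integral_const_mul,
          integral_const_mul, G.integral_comp_comm hZ1]
        simp
    _ = (1 + Δ * c₁ p) * ‖a‖ ^ p + Δ * c₂ p Δmax * ‖S‖ ^ p * ∫ ω, ‖Z ω‖ ^ p ∂P := by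
        rw [hZ0, map_zero, mul_zero, add_zero]

theorem euler_sub_euler {d q : ℕ} (Δ : ℝ) (b : ℝ → Euc d → Euc d)
    (σ : ℝ → Euc d → (Euc q →L[ℝ] Euc d)) (t : ℝ) (x x' : Euc d) (e : Euc q) :
    euler Δ b σ t x e - euler Δ b σ t x' e
      = (x - x' + Δ • (b t x - b t x')) + √Δ • (σ t x - σ t x') e := by
  simp only [euler, FunLike.coe_sub, Pi.sub_apply, smul_sub]
  abel

theorem integral_norm_euler_sub_euler_rpow_le {d q : ℕ} {Δ Δmax p Lb Lσ : ℝ} (hΔ : 0 ≤ Δ)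
    (hΔmax : Δ ≤ Δmax) (hp : 2 ≤ p) {b : ℝ → Euc d → Euc d}
    {σ : ℝ → Euc d → (Euc q →L[ℝ] Euc d)} (hLb : 0 ≤ Lb) (hLσ : 0 ≤ Lσ) {t : ℝ} {x x' : Euc d}
    (hb : ‖b t x - b t x'‖ ≤ Lb * ‖x - x'‖) (hσ : ‖σ t x - σ t x'‖ ≤ Lσ * ‖x - x'‖)
    {Ω : Type*} [MeasurableSpace Ω] {P : Measure Ω} [IsProbabilityMeasure P] {Z : Ω → Euc q}
    (hZ1 : Integrable Z P) (hZ0 : ∫ ω, Z ω ∂P = 0) (hZp : Integrable (fun ω => ‖Z ω‖ ^ p) P) :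
    ∫ ω, ‖euler Δ b σ t x (Z ω) - euler Δ b σ t x' (Z ω)‖ ^ p ∂P
      ≤ ‖x - x'‖ ^ p * exp (Δ * (p * Lb + c₁ p + Lσ ^ p * c₂ p Δmax * ∫ ω, ‖Z ω‖ ^ p ∂P)) := by
  set M := ∫ ω, ‖Z ω‖ ^ p ∂P
  have hM : 0 ≤ M := integral_nonneg fun ω => by positivity
  have hdrift : ‖x - x' + Δ • (b t x - b t x')‖ ^ p ≤ ‖x - x'‖ ^ p * exp (Δ * (p * Lb)) := by
    have h : ‖x - x' + Δ • (b t x - b t x')‖ ≤ exp (Δ * Lb) * ‖x - x'‖ := by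
      calc ‖x - x' + Δ • (b t x - b t x')‖ ≤ ‖x - x'‖ + Δ * (Lb * ‖x - x'‖) := by
            grw [norm_add_le, norm_smul, norm_of_nonneg hΔ, hb]
        _ = (Δ * Lb + 1) * ‖x - x'‖ := by ring
        _ ≤ exp (Δ * Lb) * ‖x - x'‖ := by gcongr; exact add_one_le_exp _
    calc _ ≤ (exp (Δ * Lb) * ‖x - x'‖) ^ p := by gcongr
      _ = ‖x - x'‖ ^ p * exp (Δ * (p * Lb)) := by
        rw [mul_rpow (exp_nonneg _) (norm_nonneg _), ← exp_mul]; ring_nf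
  have hdiffusion : ‖σ t x - σ t x'‖ ^ p ≤ Lσ ^ p * ‖x - x'‖ ^ p := by
    rw [← mul_rpow hLσ (norm_nonneg _)]
    gcongr
  have hc₁ : 0 ≤ 1 + Δ * c₁ p := by have := c₁_nonneg hp; positivity
  have hc₂ : 0 ≤ c₂ p Δmax := c₂_nonneg (by linarith) (hΔ.trans hΔmax)
  simp_rw [euler_sub_euler]
  calc _ ≤ (1 + Δ * c₁ p) * ‖x - x' + Δ • (b t x - b t x')‖ ^ p
          + Δ * c₂ p Δmax * ‖σ t x - σ t x'‖ ^ p * M :=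
        integral_norm_add_sqrt_smul_rpow_le hp hΔ hΔmax _ _ hZ1 hZ0 hZp
    _ ≤ (1 + Δ * c₁ p) * (‖x - x'‖ ^ p * exp (Δ * (p * Lb)))
          + Δ * c₂ p Δmax * (Lσ ^ p * ‖x - x'‖ ^ p) * M := by
        gcongr
    _ = ‖x - x'‖ ^ p
          * ((1 + Δ * c₁ p) * exp (Δ * (p * Lb)) + Δ * (Lσ ^ p * c₂ p Δmax * M)) := by ring
    _ ≤ ‖x - x'‖ ^ p
          * exp (Δ * (p * Lb) + Δ * c₁ p + Δ * (Lσ ^ p * c₂ p Δmax * M)) := by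
        gcongr
        exact one_add_mul_exp_add_le_exp (by positivity) (by positivity)
    _ = ‖x - x'‖ ^ p * exp (Δ * (p * Lb + c₁ p + Lσ ^ p * c₂ p Δmax * M)) := by
        ring_nf

theorem euler_Lp_lipschitz_of_two_le_general (d q : ℕ) (T Δmax : ℝ) (n : ℕ) (hT : 0 < T)
    (hΔ : T / n < Δmax) (p : ℝ) (hp : 2 ≤ p)
    (b : ℝ → Euc d → Euc d) (σ : ℝ → Euc d → (Euc q →L[ℝ] Euc d)) (Lb Lσ : ℝ)
    (hLb : 0 ≤ Lb) (hLσ : 0 ≤ Lσ)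
    (hb : ∀ t x y, ‖b t x - b t y‖ ≤ Lb * ‖x - y‖)
    (hσ : ∀ t x y, ‖σ t x - σ t y‖ ≤ Lσ * ‖x - y‖)
    (Ω : Type*) [MeasurableSpace Ω] (P : Measure Ω) [IsProbabilityMeasure P]
    (Z : Ω → Euc q) (hZ1 : Integrable Z P)
    (hZ0 : (∫ ω, Z ω ∂P) = 0) (hZp : Integrable (fun ω => ‖Z ω‖ ^ p) P)
    (x x' : Euc d) (k : ℕ) :
    (∫ ω, ‖euler (T / n) b σ ((k : ℝ) * (T / n)) x (Z ω)
          - euler (T / n) b σ ((k : ℝ) * (T / n)) x' (Z ω)‖ ^ p ∂P)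
        ≤ ‖x - x'‖ ^ p
          * Real.exp ((T / n) * (p * Lb + c₁ p + Lσ ^ p * c₂ p Δmax * ∫ ω, ‖Z ω‖ ^ p ∂P))
      ∧ (∫ ω, ‖euler (T / n) b σ ((k : ℝ) * (T / n)) x (Z ω)
          - euler (T / n) b σ ((k : ℝ) * (T / n)) x' (Z ω)‖ ^ p ∂P) ^ (1 / p)
        ≤ Real.exp ((T / n) * (p * Lb + c₁ p + Lσ ^ p * c₂ p Δmax * ∫ ω, ‖Z ω‖ ^ p ∂P) / p)
          * ‖x - x'‖ := by
  have hE := integral_norm_euler_sub_euler_rpow_le (div_nonneg hT.le n.cast_nonneg) hΔ.le hp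
    hLb hLσ (hb (k * (T / n)) x x') (hσ (k * (T / n)) x x') hZ1 hZ0 hZp
  exact ⟨hE, rpow_one_div_le_of_le_rpow_mul_exp (integral_nonneg fun ω => by positivity)
    (norm_nonneg _) (by linarith) hE⟩

/-- `L^p`-Lipschitz property of the Euler operator for `p ≥ 2`:
`E|E_k(x,Z) − E_k(x',Z)|^p ≤ |x−x'|^p exp(Δ(p[b]_Lip + c_p^{(1)} + [σ]_Lip^p c^{(2)}_{p,Δmax} E|Z|^p))`,
and in particular `E_k(·,Z)` is `L^p`-Lipschitz with constant `exp(Δ(⋯)/p)`. -/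
theorem euler_Lp_lipschitz_of_two_le (d q : ℕ) (T Δmax : ℝ) (n : ℕ) (hn : 0 < n) (hT : 0 < T)
    (hΔmax : 0 < Δmax) (hΔ : T / n < Δmax) (p : ℝ) (hp : 2 ≤ p)
    (b : ℝ → Euc d → Euc d) (σ : ℝ → Euc d → (Euc q →L[ℝ] Euc d)) (Lb Lσ : ℝ)
    (hLb : 0 ≤ Lb) (hLσ : 0 ≤ Lσ)
    (hb : ∀ t x y, ‖b t x - b t y‖ ≤ Lb * ‖x - y‖)
    (hσ : ∀ t x y, ‖σ t x - σ t y‖ ≤ Lσ * ‖x - y‖)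
    (Ω : Type*) [MeasurableSpace Ω] (P : Measure Ω) [IsProbabilityMeasure P]
    (Z : Ω → Euc q) (hZm : Measurable Z) (hZ1 : Integrable Z P)
    (hZ0 : (∫ ω, Z ω ∂P) = 0) (hZp : Integrable (fun ω => ‖Z ω‖ ^ p) P)
    (x x' : Euc d) (k : ℕ) :
    (∫ ω, ‖euler (T / n) b σ ((k : ℝ) * (T / n)) x (Z ω)
          - euler (T / n) b σ ((k : ℝ) * (T / n)) x' (Z ω)‖ ^ p ∂P)
        ≤ ‖x - x'‖ ^ p
          * Real.exp ((T / n) * (p * Lb + c₁ p + Lσ ^ p * c₂ p Δmax * ∫ ω, ‖Z ω‖ ^ p ∂P))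
      ∧ (∫ ω, ‖euler (T / n) b σ ((k : ℝ) * (T / n)) x (Z ω)
          - euler (T / n) b σ ((k : ℝ) * (T / n)) x' (Z ω)‖ ^ p ∂P) ^ (1 / p)
        ≤ Real.exp ((T / n) * (p * Lb + c₁ p + Lσ ^ p * c₂ p Δmax * ∫ ω, ‖Z ω‖ ^ p ∂P) / p)
          * ‖x - x'‖ :=
  euler_Lp_lipschitz_of_two_le_general d q T Δmax n hT hΔ p hp b σ Lb Lσ hLb hLσ hb hσ Ω P Z hZ1 hZ0
    hZp x x' k
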